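/- arXiv:1608.06017 — 4 statements merged into one kernel-verified Lean document; each statement's English description precedes it below -/
import Mathlib

section
/- For n = 4, a weighted graph f : E(K_4) → ℝ is a real linear combination of the characteristic vectors of the four triangles of K_4 if and only if the sum of the weights on each of the three perfect matchings (pairs of disjoint edges) of K_4 is the same constant. -/
/-!
Each triangle of `K₄` omits exactly one vertex, so it contains exactly one edge of every perfect
matching `{e, eᶜ}`. Hence for `f = ∑ c_K · 1_K` every matching sum equals `∑ c_K`. Conversely, if all
matching sums equal `s`, then `c_K = (∑_{e ⊆ K} f e - s) / 2` represents `f`: the two triangles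
through an edge `e` together contain `e` twice and one edge of each of the two other matchings.
-/

open Finset

section CoSingleton

variable {α R : Type*} [Fintype α] [DecidableEq α] [Semiring R]

lemma ite_subset_add_ite_compl_subset {K : Finset α} (hK : #K + 1 = Fintype.card α)
    (e : Finset α) : ((if e ⊆ K then 1 else 0 : R) + if eᶜ ⊆ K then 1 else 0) = 1 := by
  obtain ⟨v, hv⟩ : ∃ v, Kᶜ = {v} := card_eq_one.mp (by rw [card_compl]; omega)
  rw [← compl_compl K, hv]
  by_cases hve : v ∈ e <;> simp [subset_compl_singleton, hve]

lemma sum_mul_ite_subset_add_sum_mul_ite_compl_subset {T : Finset (Finset α)}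
    (hT : ∀ K ∈ T, #K + 1 = Fintype.card α) (c : Finset α → R) (e : Finset α) :
    (∑ K ∈ T, c K * if e ⊆ K then 1 else 0) + (∑ K ∈ T, c K * if eᶜ ⊆ K then 1 else 0) =
      ∑ K ∈ T, c K := by
  rw [← sum_add_distrib]
  refine sum_congr rfl fun K hK => ?_
  rw [← mul_add, ite_subset_add_ite_compl_subset (hT K hK), mul_one]

end CoSingleton

lemma sum_filter_card_eq_three_fin_four {M : Type*} [AddCommMonoid M] (g : Finset (Fin 4) → M) :
    ∑ K ∈ univ.filter (fun K : Finset (Fin 4) => #K = 3), g K =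
      g {0, 1, 2} + g {0, 1, 3} + g {0, 2, 3} + g {1, 2, 3} := by
  rw [show univ.filter (fun K : Finset (Fin 4) => #K = 3) =
    {{0, 1, 2}, {0, 1, 3}, {0, 2, 3}, {1, 2, 3}} by decide]
  simp +decide [add_assoc]

lemma sum_filter_card_eq_two_fin_four {M : Type*} [AddCommMonoid M] (g : Finset (Fin 4) → M) :
    ∑ e ∈ univ.filter (fun e : Finset (Fin 4) => #e = 2), g e =
      g {0, 1} + g {0, 2} + g {0, 3} + g {1, 2} + g {1, 3} + g {2, 3} := by
  rw [show univ.filter (fun e : Finset (Fin 4) => #e = 2) =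
    {{0, 1}, {0, 2}, {0, 3}, {1, 2}, {1, 3}, {2, 3}} by decide]
  simp +decide [add_assoc]

lemma add_compl_eq_sum_of_eq_sum_triangles {f c : Finset (Fin 4) → ℝ}
    (hc : ∀ e : Finset (Fin 4), #e = 2 →
      f e = ∑ K ∈ univ.filter (fun K : Finset (Fin 4) => #K = 3), c K * if e ⊆ K then 1 else 0)
    {e : Finset (Fin 4)} (he : #e = 2) :
    f e + f eᶜ = ∑ K ∈ univ.filter (fun K : Finset (Fin 4) => #K = 3), c K := by
  rw [hc e he, hc eᶜ (by rw [card_compl, he]; rfl)]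
  exact sum_mul_ite_subset_add_sum_mul_ite_compl_subset (by simp) c e

lemma eq_sum_triangles_of_matching_sums_eq {f : Finset (Fin 4) → ℝ}
    (h02 : f {0, 1} + f {2, 3} = f {0, 2} + f {1, 3})
    (h03 : f {0, 1} + f {2, 3} = f {0, 3} + f {1, 2}) {e : Finset (Fin 4)} (he : #e = 2) :
    f e = ∑ K ∈ univ.filter (fun K : Finset (Fin 4) => #K = 3),
      ((∑ e' ∈ univ.filter (fun e' : Finset (Fin 4) => #e' = 2), if e' ⊆ K then f e' else 0) -
        (f {0, 1} + f {2, 3})) / 2 * if e ⊆ K then 1 else 0 := by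
  have hedge : e ∈ univ.filter (fun e : Finset (Fin 4) => #e = 2) := by simpa using he
  rw [show univ.filter (fun e : Finset (Fin 4) => #e = 2) =
    {{0, 1}, {0, 2}, {0, 3}, {1, 2}, {1, 3}, {2, 3}} by decide] at hedge
  simp only [sum_filter_card_eq_three_fin_four, sum_filter_card_eq_two_fin_four]
  fin_cases hedge <;> simp +decide only [↓reduceIte, add_zero, zero_add, mul_one, mul_zero] <;>
    linarith

/-- For n = 4, a weighted graph is a linear combination of the four triangles
iff the sums over the three perfect matchings of K_4 agree. -/
theorem stmt_0 (f : Finset (Fin 4) → ℝ) :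
    (∃ c : Finset (Fin 4) → ℝ, ∀ e : Finset (Fin 4), e.card = 2 →
      f e = ∑ K ∈ Finset.univ.filter (fun K : Finset (Fin 4) => K.card = 3),
        c K * (if e ⊆ K then 1 else 0)) ↔
    (f {0, 1} + f {2, 3} = f {0, 2} + f {1, 3} ∧
     f {0, 1} + f {2, 3} = f {0, 3} + f {1, 2}) := by
  constructor
  · rintro ⟨c, hc⟩
    have h01 := add_compl_eq_sum_of_eq_sum_triangles hc (e := {0, 1}) rfl
    have h02 := add_compl_eq_sum_of_eq_sum_triangles hc (e := {0, 2}) rfl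
    have h03 := add_compl_eq_sum_of_eq_sum_triangles hc (e := {0, 3}) rfl
    rw [show ({0, 1} : Finset (Fin 4))ᶜ = {2, 3} by decide] at h01
    rw [show ({0, 2} : Finset (Fin 4))ᶜ = {1, 3} by decide] at h02
    rw [show ({0, 3} : Finset (Fin 4))ᶜ = {1, 2} by decide] at h03
    constructor <;> linarith
  · rintro ⟨h02, h03⟩
    exact ⟨_, fun e he => eq_sum_triangles_of_matching_sums_eq h02 h03 he⟩
end

section
/- Let n = 5 and let W be the 10 × 10 inclusion matrix of 2-subsets versus 3-subsets of [5], i.e., W(e,K) = 1 if e ⊆ K and 0 otherwise. Then the matrix U with rows indexed by 3-subsets and columns by 2-subsets, defined by U(K,e) = 1/3 if |K ∩ e| ∈ {0,2} and U(K,e) = -1/6 if |K ∩ e| = 1, satisfies U W = I. -/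
/-!
The entry of `U5 * W5` at `(K, K')` is the sum of `U5 K e` over the three pairs `e ⊆ K'`.
If `a = #(K ∩ K')`, exactly `a * (3 - a)` of these pairs meet `K` in one point (one end in
`K ∩ K'`, the other in `K' \ K`), so the entry is `1 - a (3 - a) / 2`. Two triples in a 5-set
always meet, and `a = 3` only for `K = K'`; hence the entry is `1` on the diagonal and `0` off it.
-/

abbrev E5 := {e : Finset (Fin 5) // e.card = 2}
abbrev T5 := {K : Finset (Fin 5) // K.card = 3}

/-- The inclusion matrix of pairs vs triples of [5]. -/
def W5 : Matrix E5 T5 ℝ := fun e K => if e.1 ⊆ K.1 then 1 else 0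

/-- The claimed inverse. -/
noncomputable def U5 : Matrix T5 E5 ℝ := fun K e => if (K.1 ∩ e.1).card = 1 then -(1/6) else 1/3

open Finset

section

variable {α : Type*} [DecidableEq α]

theorem card_filter_powersetCard_two_card_inter_eq_one (A B : Finset α) :
    #{e ∈ B.powersetCard 2 | #(A ∩ e) = 1} = #(A ∩ B) * #(B \ A) := by
  rw [← card_product]
  symm
  refine card_bij (fun p _ => {p.1, p.2}) ?_ ?_ ?_
  · rintro ⟨x, y⟩ hp
    simp only [mem_product, mem_inter, mem_sdiff] at hp
    have hxy : x ≠ y := by rintro rfl; exact hp.2.2 hp.1.1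
    have hA : A ∩ {x, y} = {x} := by grind
    simp [mem_powersetCard, insert_subset_iff, card_pair hxy, hA, hp.1.2, hp.2.1]
  · rintro ⟨x, y⟩ hp ⟨x', y'⟩ hp' h
    simp only [mem_product, mem_inter, mem_sdiff] at hp hp'
    have hx : x ∈ ({x', y'} : Finset α) := h ▸ mem_insert_self x {y}
    have hy : y ∈ ({x', y'} : Finset α) := h ▸ mem_insert_of_mem (mem_singleton_self y)
    simp only [mem_insert, mem_singleton] at hx hy
    grind
  · intro e he
    simp only [mem_filter, mem_powersetCard] at he
    obtain ⟨⟨heB, he2⟩, heA⟩ := he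
    obtain ⟨x, hx⟩ := card_eq_one.mp heA
    obtain ⟨y, hy⟩ : ∃ y, e \ A = {y} := card_eq_one.mp (by grind)
    have hxAe : x ∈ A ∩ e := hx ▸ mem_singleton_self x
    have hyeA : y ∈ e \ A := hy ▸ mem_singleton_self y
    simp only [mem_inter, mem_sdiff] at hxAe hyeA
    refine ⟨(x, y), ?_, ?_⟩
    · simp [hxAe.1, heB hxAe.2, heB hyeA.1, hyeA.2]
    · change {x, y} = e
      rw [← sdiff_union_inter e A, inter_comm e A, hx, hy, union_comm, insert_eq]

theorem sum_powersetCard_two_ite_card_inter_eq_one (A : Finset α) {B : Finset α} (hB : #B = 3) :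
    ∑ e ∈ B.powersetCard 2, (if #(A ∩ e) = 1 then -(1/6) else 1/3 : ℝ) =
      1 - ((#(A ∩ B) * #(B \ A) : ℕ) : ℝ) / 2 := by
  have htotal := card_filter_add_card_filter_not (s := B.powersetCard 2) (fun e => #(A ∩ e) = 1)
  rw [card_powersetCard, hB, card_filter_powersetCard_two_card_inter_eq_one] at htotal
  rw [sum_ite, sum_const, sum_const, card_filter_powersetCard_two_card_inter_eq_one,
    nsmul_eq_mul, nsmul_eq_mul]
  have hcompl : (#{e ∈ B.powersetCard 2 | ¬#(A ∩ e) = 1} : ℝ) = 3 - #(A ∩ B) * #(B \ A) := by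
    rw [eq_sub_iff_add_eq']; exact_mod_cast htotal
  rw [hcompl]; push_cast; ring

theorem card_inter_mul_card_sdiff_eq_two [Fintype α] (hα : Fintype.card α ≤ 5) {s t : Finset α}
    (hs : #s = 3) (ht : #t = 3) (hst : s ≠ t) : #(s ∩ t) * #(t \ s) = 2 := by
  have hunion := card_inter_add_card_union s t
  have hle : #(s ∪ t) ≤ 5 := (card_le_univ _).trans hα
  have hne : #(s ∩ t) ≠ 3 := fun h => hst <|
    (eq_of_subset_of_card_le inter_subset_left (by omega)).symm.trans
      (eq_of_subset_of_card_le inter_subset_right (by omega))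
  have hle3 : #(s ∩ t) ≤ 3 := hs ▸ card_le_card inter_subset_left
  rw [card_sdiff, ht]
  interval_cases h : #(s ∩ t) <;> omega

end

theorem U5_mul_W5_apply (K K' : T5) :
    (U5 * W5) K K' = ∑ e ∈ K'.1.powersetCard 2, (if #(K.1 ∩ e) = 1 then -(1/6) else 1/3 : ℝ) := by
  rw [Matrix.mul_apply]
  simp only [U5, W5, mul_ite, mul_one, mul_zero]
  rw [← sum_filter]
  symm
  refine sum_bij' (fun e he => ⟨e, (mem_powersetCard.mp he).2⟩) (fun e _ => e.1) ?_ ?_ ?_ ?_ ?_ <;>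
    simp_all [mem_powersetCard]

theorem stmt_3 : U5 * W5 = 1 := by
  ext K K'
  rw [U5_mul_W5_apply, sum_powersetCard_two_ite_card_inter_eq_one _ K'.2, Matrix.one_apply]
  split_ifs with h
  · simp [h]
  · rw [card_inter_mul_card_sdiff_eq_two (Fintype.card_fin 5).le K.2 K'.2
      (Subtype.val_injective.ne h)]
    norm_num
end

section
/- Let n ≥ 5 and suppose y : binom([n],2) → F_3 satisfies y(e₁) + y(e₂) + y(e₃) = 0 for the three edges of every triangle in K_n. Then y is constant. -/
/-!
Four distinct vertices `a, b, c, d` span four triangles; adding the relations of the two triangles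
through `ab` and subtracting those of the two through `cd` gives `2 y(ab) = 2 y(cd)`, and `2` is
invertible in `𝔽₃`, so `y` agrees on disjoint edges. With at least five vertices any two edges
are either disjoint or together cover at most three vertices, leaving room for an edge disjoint
from both.
-/

open Finset

variable {α : Type*} [DecidableEq α]

theorem sum_powersetCard_two_triple {M : Type*} [AddCommMonoid M]
    (y : Finset α → M) {a b c : α} (hab : a ≠ b) (hac : a ≠ c) (hbc : b ≠ c) :
    ∑ e ∈ ({a, b, c} : Finset α).powersetCard 2, y e = y {a, b} + y {a, c} + y {b, c} := by
  have ha : a ∉ ({b, c} : Finset α) := by simp [hab, hac]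
  have hb : b ∉ ({a, c} : Finset α) := by simp [hab.symm, hbc]
  rw [powersetCard_succ_insert ha, powersetCard_succ_insert (by simpa using hbc),
    powersetCard_eq_empty.2 (by simp), powersetCard_one, powersetCard_one]
  have h₁ : ({a, b} : Finset α) ≠ {b, c} := ne_of_mem_of_not_mem' (by simp) ha
  have h₂ : ({a, b} : Finset α) ≠ {a, c} := ne_of_mem_of_not_mem' (by simp) hb
  have h₃ : ({b, c} : Finset α) ≠ {a, c} := ne_of_mem_of_not_mem' (by simp) hb
  simp [sum_insert, h₁, h₂, h₃, add_comm, add_assoc]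

theorem exists_card_two_disjoint [Fintype α] (s : Finset α) (hs : #s + 2 ≤ Fintype.card α) :
    ∃ g : Finset α, #g = 2 ∧ Disjoint s g := by
  obtain ⟨g, hg, hcard⟩ := exists_subset_card_eq (s := sᶜ) (n := 2) (by rw [card_compl]; omega)
  exact ⟨g, hcard, subset_compl_iff_disjoint_left.1 hg⟩

theorem card_union_le_three_of_not_disjoint {e f : Finset α} (he : #e = 2) (hf : #f = 2)
    (hef : ¬Disjoint e f) : #(e ∪ f) ≤ 3 := by
  have hinter : 0 < #(e ∩ f) := card_pos.2 (not_disjoint_iff_nonempty_inter.1 hef)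
  have := card_union_add_card_inter e f
  omega

section TriangleRelation

variable {G : Type*} [AddCommGroup G] {y : Finset α → G}

theorem eq_of_disjoint_of_triangle_sum_eq_zero (h2 : ∀ x : G, 2 • x = 0 → x = 0)
    (htri : ∀ a b c : α, a ≠ b → a ≠ c → b ≠ c → y {a, b} + y {a, c} + y {b, c} = 0)
    {e f : Finset α} (he : #e = 2) (hf : #f = 2) (hef : Disjoint e f) : y e = y f := by
  obtain ⟨a, b, hab, rfl⟩ := card_eq_two.1 he
  obtain ⟨c, d, hcd, rfl⟩ := card_eq_two.1 hf
  simp only [disjoint_insert_left, disjoint_singleton_left, mem_insert, mem_singleton,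
    not_or] at hef
  obtain ⟨⟨hac, had⟩, hbc, hbd⟩ := hef
  have key : 2 • (y {a, b} - y {c, d}) =
      (y {a, b} + y {a, c} + y {b, c}) + (y {a, b} + y {a, d} + y {b, d})
        - (y {a, c} + y {a, d} + y {c, d}) - (y {b, c} + y {b, d} + y {c, d}) := by
    abel
  rw [htri a b c hab hac hbc, htri a b d hab had hbd, htri a c d hac had hcd,
    htri b c d hbc hbd hcd] at key
  exact sub_eq_zero.1 (h2 _ (by simpa using key))

theorem eq_of_card_two_of_triangle_sum_eq_zero [Fintype α] (hα : 5 ≤ Fintype.card α)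
    (h2 : ∀ x : G, 2 • x = 0 → x = 0)
    (htri : ∀ a b c : α, a ≠ b → a ≠ c → b ≠ c → y {a, b} + y {a, c} + y {b, c} = 0)
    {e f : Finset α} (he : #e = 2) (hf : #f = 2) : y e = y f := by
  by_cases hef : Disjoint e f
  · exact eq_of_disjoint_of_triangle_sum_eq_zero h2 htri he hf hef
  obtain ⟨g, hg, hdisj⟩ :=
    exists_card_two_disjoint (e ∪ f) (by linarith [card_union_le_three_of_not_disjoint he hf hef])
  rw [disjoint_union_left] at hdisj
  rw [eq_of_disjoint_of_triangle_sum_eq_zero h2 htri he hg hdisj.1,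
    eq_of_disjoint_of_triangle_sum_eq_zero h2 htri hf hg hdisj.2]

end TriangleRelation

/-- If a ternary edge-weighting sums to 0 on every triangle of K_n, n ≥ 5,
then it is constant on edges. -/
theorem stmt_9 (n : ℕ) (hn : 5 ≤ n) (y : Finset (Fin n) → ZMod 3)
    (h : ∀ K : Finset (Fin n), K.card = 3 →
      (∑ e ∈ K.powerset.filter (fun e => e.card = 2), y e) = 0) :
    ∀ e f : Finset (Fin n), e.card = 2 → f.card = 2 → y e = y f := by
  have htri (a b c : Fin n) (hab : a ≠ b) (hac : a ≠ c) (hbc : b ≠ c) :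
      y {a, b} + y {a, c} + y {b, c} = 0 := by
    rw [← sum_powersetCard_two_triple y hab hac hbc, powersetCard_eq_filter]
    exact h _ (card_eq_three.2 ⟨a, b, c, hab, hac, hbc, rfl⟩)
  intro e f he hf
  exact eq_of_card_two_of_triangle_sum_eq_zero (by simpa using hn) (by decide) htri he hf
end

section
/- Let n ≥ 8 and (A,B) a partition of {3,...,n} with |A|,|B| ≥ 3. Let G be the graph on [n] with edge set: all 2-subsets of A ∪ B, the edges {2,a} for a ∈ A, the edges {1,b} for b ∈ B, and the edge {1,2}. Let y be the binary star vector (y({1,2}) = -1, y({1,a}) = 1 for a ∈ A, y({2,b}) = 1 for b ∈ B, y = 0 elsewhere). Then ⟨y, 1_G⟩ = -1, so G has no fractional triangle decomposition. -/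
/-!
Weak duality: if `1_G = ∑ c_K 1_K` with `c ≥ 0`, then `⟨y, 1_G⟩ = ∑ c_K ⟨y, 1_K⟩` is nonnegative
as soon as `y` is nonnegative on every triangle. The binary star `y` is: its only negative edge
`{1,2}` (`{u,v}` below) has weight `-1`, and the third vertex `x` of a triangle through it lies
in `A` or `B`, so the triangle also contains `{1,x}` (if `x ∈ A`) or `{2,x}` (if `x ∈ B`), of
weight `1`. On the other hand `G` avoids the support of `y` except for `{1,2}`, so
`⟨y, 1_G⟩ = -1`.
-/

open Finset

theorem Finset.pair_eq_pair_iff {α : Type*} [DecidableEq α] {a b c d : α} :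
    ({a, b} : Finset α) = {c, d} ↔ a = c ∧ b = d ∨ a = d ∧ b = c := by
  refine ⟨fun h => ?_, by rintro (⟨rfl, rfl⟩ | ⟨rfl, rfl⟩) <;> simp [pair_comm]⟩
  have ha : a ∈ ({c, d} : Finset α) := h ▸ mem_insert_self a {b}
  have hb : b ∈ ({c, d} : Finset α) := h ▸ mem_insert_of_mem (mem_singleton_self b)
  have hc : c ∈ ({a, b} : Finset α) := h ▸ mem_insert_self c {d}
  have hd : d ∈ ({a, b} : Finset α) := h ▸ mem_insert_of_mem (mem_singleton_self d)
  simp only [mem_insert, mem_singleton] at ha hb hc hd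
  grind

theorem Finset.sum_nonneg_of_add_nonneg {ι M : Type*} [DecidableEq ι] [AddCommMonoid M]
    [PartialOrder M] [IsOrderedAddMonoid M] {s : Finset ι} {f : ι → M} {i j : ι}
    (hi : i ∈ s) (hj : j ∈ s) (hji : j ≠ i) (hf : ∀ k ∈ s, k ≠ i → 0 ≤ f k)
    (hij : 0 ≤ f i + f j) : 0 ≤ ∑ k ∈ s, f k := by
  have hj' : j ∈ s.erase i := mem_erase.2 ⟨hji, hj⟩
  rw [← add_sum_erase s f hi, ← add_sum_erase _ f hj', ← add_assoc]
  refine add_nonneg hij (sum_nonneg fun k hk => hf k ?_ ?_)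
  · exact mem_of_mem_erase (mem_of_mem_erase hk)
  · exact ne_of_mem_erase (mem_of_mem_erase hk)

theorem sum_nonneg_of_indicator_eq_nonneg_comb {ι κ R : Type*} [DecidableEq ι] [CommSemiring R]
    [PartialOrder R] [IsOrderedRing R] {E G : Finset ι} {T : Finset κ} {y : ι → R}
    {M : ι → κ → R} {c : κ → R} (hGE : G ⊆ E)
    (hc : ∀ K ∈ T, 0 ≤ c K) (hyM : ∀ K ∈ T, 0 ≤ ∑ e ∈ E, y e * M e K)
    (hG : ∀ e ∈ E, (if e ∈ G then 1 else 0) = ∑ K ∈ T, c K * M e K) :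
    0 ≤ ∑ e ∈ G, y e :=
  calc 0 ≤ ∑ K ∈ T, c K * ∑ e ∈ E, y e * M e K :=
        sum_nonneg fun K hK => mul_nonneg (hc K hK) (hyM K hK)
    _ = ∑ e ∈ E, y e * ∑ K ∈ T, c K * M e K := by
        simp only [mul_sum]
        rw [sum_comm]
        exact sum_congr rfl fun _ _ => sum_congr rfl fun _ _ => mul_left_comm _ _ _
    _ = ∑ e ∈ E, if e ∈ G then y e else 0 :=
        sum_congr rfl fun e he => by rw [← hG e he, mul_ite, mul_one, mul_zero]
    _ = ∑ e ∈ G, y e := by rw [← sum_filter, filter_mem_eq_inter, inter_eq_right.2 hGE]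

section BinaryStar

variable {α : Type*} [DecidableEq α] {u v : α} {A B : Finset α}

def binaryStar (u v : α) (A B : Finset α) (e : Finset α) : ℝ :=
  if e = {u, v} then -1
  else if (∃ a ∈ A, e = {u, a}) ∨ (∃ b ∈ B, e = {v, b}) then 1 else 0

theorem binaryStar_pair_self : binaryStar u v A B {u, v} = -1 := if_pos rfl

theorem binaryStar_nonneg {e : Finset α} (he : e ≠ {u, v}) : 0 ≤ binaryStar u v A B e := by
  rw [binaryStar, if_neg he]
  split_ifs <;> norm_num

theorem binaryStar_pair_left {a : α} (ha : a ∈ A) (hav : a ≠ v) :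
    binaryStar u v A B {u, a} = 1 := by
  have hne : ({u, a} : Finset α) ≠ {u, v} := by
    rw [Ne, pair_eq_pair_iff]
    rintro (⟨-, rfl⟩ | ⟨rfl, rfl⟩) <;> exact hav rfl
  rw [binaryStar, if_neg hne, if_pos (Or.inl ⟨a, ha, rfl⟩)]

theorem binaryStar_pair_right {b : α} (hb : b ∈ B) (hbu : b ≠ u) :
    binaryStar u v A B {v, b} = 1 := by
  have hne : ({v, b} : Finset α) ≠ {u, v} := by
    rw [Ne, pair_eq_pair_iff]
    rintro (⟨rfl, rfl⟩ | ⟨-, rfl⟩) <;> exact hbu rfl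
  rw [binaryStar, if_neg hne, if_pos (Or.inr ⟨b, hb, rfl⟩)]

theorem exists_subset_binaryStar_eq_one [Fintype α] (hpart : A ∪ B = {u, v}ᶜ) {K : Finset α}
    (hK : K.card = 3) (huvK : {u, v} ⊆ K) :
    ∃ e ⊆ K, e.card = 2 ∧ e ≠ {u, v} ∧ binaryStar u v A B e = 1 := by
  obtain ⟨x, hxK, hx⟩ := exists_mem_notMem_of_card_lt_card
    ((card_le_two (a := u) (b := v)).trans_lt (by omega : 2 < K.card))
  have hxAB : x ∈ A ∪ B := hpart ▸ mem_compl.2 hx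
  have hxu : x ≠ u := fun h => hx (by simp [h])
  have hxv : x ≠ v := fun h => hx (by simp [h])
  have hne {w : α} : ({w, x} : Finset α) ≠ {u, v} := fun h => hx (h ▸ by simp)
  rcases mem_union.1 hxAB with hxA | hxB
  · refine ⟨{u, x}, ?_, card_pair hxu.symm, hne, binaryStar_pair_left hxA hxv⟩
    exact insert_subset (huvK (mem_insert_self u {v})) (singleton_subset_iff.2 hxK)
  · refine ⟨{v, x}, ?_, card_pair hxv.symm, hne, binaryStar_pair_right hxB hxu⟩
    exact insert_subset (huvK (by simp)) (singleton_subset_iff.2 hxK)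

theorem binaryStar_triangle_nonneg [Fintype α] (huv : u ≠ v) (hpart : A ∪ B = {u, v}ᶜ)
    {K : Finset α} (hK : K.card = 3) :
    0 ≤ ∑ e ∈ univ.filter (fun e : Finset α => e.card = 2),
      binaryStar u v A B e * if e ⊆ K then 1 else 0 := by
  simp only [mul_ite, mul_one, mul_zero, ← sum_filter]
  by_cases huvK : {u, v} ⊆ K
  · obtain ⟨e, heK, he, hne, he1⟩ := exists_subset_binaryStar_eq_one hpart hK huvK
    refine sum_nonneg_of_add_nonneg (i := {u, v}) (j := e) ?_ ?_ hne
      (fun _ _ hk => binaryStar_nonneg hk) (by rw [binaryStar_pair_self, he1]; norm_num)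
    · simp [card_pair huv, huvK]
    · simp [he, heK]
  · exact sum_nonneg fun e he => binaryStar_nonneg fun h => huvK (h ▸ (mem_filter.1 he).2)

def IsObstructionEdge (u v : α) (A B : Finset α) (e : Finset α) : Prop :=
  (e ⊆ A ∪ B ∧ e.card = 2) ∨ e = {u, v} ∨ (∃ a ∈ A, e = {v, a}) ∨ (∃ b ∈ B, e = {u, b})

theorem IsObstructionEdge.card_eq_two {e : Finset α} (huv : u ≠ v) (hu : u ∉ A ∪ B)
    (hv : v ∉ A ∪ B) (he : IsObstructionEdge u v A B e) : e.card = 2 := by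
  rcases he with ⟨-, he⟩ | rfl | ⟨a, ha, rfl⟩ | ⟨b, hb, rfl⟩
  · exact he
  · exact card_pair huv
  · exact card_pair fun h => hv (mem_union_left B (h ▸ ha))
  · exact card_pair fun h => hu (mem_union_right A (h ▸ hb))

theorem IsObstructionEdge.binaryStar_eq_zero {e : Finset α} (huv : u ≠ v) (hu : u ∉ A ∪ B)
    (hv : v ∉ A ∪ B) (hAB : Disjoint A B) (he : IsObstructionEdge u v A B e) (hne : e ≠ {u, v}) :
    binaryStar u v A B e = 0 := by
  rw [binaryStar, if_neg hne, if_neg]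
  rw [disjoint_left] at hAB
  rintro (⟨a, ha, rfl⟩ | ⟨b, hb, rfl⟩) <;>
    simp only [IsObstructionEdge, pair_eq_pair_iff, insert_subset_iff,
      singleton_subset_iff] at he hne <;>
    grind

theorem sum_binaryStar_of_isObstructionEdge {G : Finset (Finset α)} (huv : u ≠ v)
    (hu : u ∉ A ∪ B) (hv : v ∉ A ∪ B) (hAB : Disjoint A B)
    (hG : ∀ e, e ∈ G ↔ IsObstructionEdge u v A B e) :
    ∑ e ∈ G, binaryStar u v A B e = -1 := by
  have huvG : {u, v} ∈ G := (hG _).2 (Or.inr (Or.inl rfl))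
  rw [sum_eq_single_of_mem _ huvG fun e he hne =>
    ((hG e).1 he).binaryStar_eq_zero huv hu hv hAB hne, binaryStar_pair_self]

end BinaryStar

/-- The binary star vector has inner product -1 with the indicator of the
graph built from K_{n-2} on A ∪ B, the edges from 2 to A, from 1 to B, and
the edge {1,2}; hence this graph has no fractional triangle decomposition. -/
theorem stmt_15 (n : ℕ) (hn : 8 ≤ n)
    (v1 v2 : Fin n) (hv1 : v1 = ⟨0, by omega⟩) (hv2 : v2 = ⟨1, by omega⟩)
    (A B : Finset (Fin n)) (hdisj : Disjoint A B)
    (hpart : A ∪ B = ({v1, v2} : Finset (Fin n))ᶜ)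
    (y : Finset (Fin n) → ℝ)
    (hy : ∀ e : Finset (Fin n),
      y e = if e = ({v1, v2} : Finset (Fin n)) then -1
            else if (∃ a ∈ A, e = ({v1, a} : Finset (Fin n))) ∨
                    (∃ b ∈ B, e = ({v2, b} : Finset (Fin n))) then 1 else 0)
    (G : Finset (Finset (Fin n)))
    (hG : ∀ e : Finset (Fin n), e ∈ G ↔
      ((e ⊆ A ∪ B ∧ e.card = 2) ∨ e = ({v1, v2} : Finset (Fin n)) ∨
       (∃ a ∈ A, e = ({v2, a} : Finset (Fin n))) ∨
       (∃ b ∈ B, e = ({v1, b} : Finset (Fin n))))) :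
    (∑ e ∈ G, y e) = -1 ∧
    ¬ ∃ c : Finset (Fin n) → ℝ, (∀ K, 0 ≤ c K) ∧
      ∀ e : Finset (Fin n), e.card = 2 →
        (if e ∈ G then (1 : ℝ) else 0) =
          ∑ K ∈ Finset.univ.filter (fun K : Finset (Fin n) => K.card = 3),
            c K * (if e ⊆ K then 1 else 0) := by
  have huv : v1 ≠ v2 := by simp [hv1, hv2, Fin.ext_iff]
  have hu : v1 ∉ A ∪ B := by simp [hpart]
  have hv : v2 ∉ A ∪ B := by simp [hpart]
  -- `congr` reconciles the two `Decidable (∃ a ∈ A, _)` instances, which differ on `Fin n`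
  obtain rfl : y = binaryStar v1 v2 A B := funext fun e => by rw [hy e, binaryStar]; congr
  have hsum := sum_binaryStar_of_isObstructionEdge huv hu hv hdisj hG
  refine ⟨hsum, fun ⟨c, hc, hcG⟩ => ?_⟩
  have hGE : G ⊆ univ.filter (fun e : Finset (Fin n) => e.card = 2) := fun e he =>
    mem_filter.2 ⟨mem_univ e, IsObstructionEdge.card_eq_two huv hu hv ((hG e).1 he)⟩
  have hnonneg := sum_nonneg_of_indicator_eq_nonneg_comb hGE (fun K _ => hc K)
    (fun K hK => binaryStar_triangle_nonneg huv hpart (mem_filter.1 hK).2)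
    (fun e he => hcG e (mem_filter.1 he).2)
  linarith
end
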